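/- arXiv:0708.3234 — 10 statements merged into one kernel-verified Lean document; each statement's English description precedes it below -/
import Mathlib

section
/- Let X be a topological space, Ω a metric space, and f_n : X → Ω continuous for each n ≥ 0. Then the set RPX = { x ∈ X : the sequence {f_n(x)}_{n≥0} has the repetition property } is a G_δ subset of X. -/
open Filter MeasureTheory

/-- A sequence in a metric space has the repetition property. -/
def HasRP {Ω : Type*} [MetricSpace Ω] (ω : ℕ → Ω) : Prop :=
  ∀ ε > 0, ∀ r : ℕ, 0 < r → ∃ q : ℕ, 0 < q ∧ ∀ n ≤ r * q, dist (ω n) (ω (n + q)) < ε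

/-- Two sequences have the joint repetition property. -/
def JointRP {Ω Ω' : Type*} [MetricSpace Ω] [MetricSpace Ω'] (ω : ℕ → Ω) (ω' : ℕ → Ω') : Prop :=
  ∀ ε > 0, ∀ r : ℕ, 0 < r → ∃ q : ℕ, 0 < q ∧
    (∀ n ≤ r * q, dist (ω n) (ω (n + q)) < ε) ∧
    (∀ n ≤ r * q, dist (ω' n) (ω' (n + q)) < ε)

/-! For fixed `ε` and `r`, the condition "some period `q` works" is a union over `q` of finitely
many strict inequalities between continuous functions of `x`, hence open. Restricting to
`ε = 1 / (k + 1)` turns the repetition property into a countable intersection of such sets. -/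

def RepeatsWithin {Ω : Type*} [PseudoMetricSpace Ω] (ω : ℕ → Ω) (ε : ℝ) (r : ℕ) : Prop :=
  ∃ q : ℕ, 0 < q ∧ ∀ n ≤ r * q, dist (ω n) (ω (n + q)) < ε

theorem RepeatsWithin.mono {Ω : Type*} [PseudoMetricSpace Ω] {ω : ℕ → Ω} {ε ε' : ℝ}
    {r r' : ℕ} (h : RepeatsWithin ω ε r) (hε : ε ≤ ε') (hr : r' ≤ r) :
    RepeatsWithin ω ε' r' := by
  obtain ⟨q, hq, hrep⟩ := h
  exact ⟨q, hq, fun n hn =>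
    (hrep n (hn.trans (Nat.mul_le_mul_right q hr))).trans_le hε⟩

theorem hasRP_iff_forall_repeatsWithin {Ω : Type*} [MetricSpace Ω] (ω : ℕ → Ω) :
    HasRP ω ↔ ∀ k r : ℕ, RepeatsWithin ω (1 / (k + 1)) (r + 1) := by
  refine ⟨fun h k r => h _ Nat.one_div_pos_of_nat _ r.succ_pos, fun h ε hε r hr => ?_⟩
  obtain ⟨k, hk⟩ := exists_nat_one_div_lt hε
  exact (h k (r - 1)).mono hk.le (by omega)

theorem isOpen_setOf_repeatsWithin {X Ω : Type*} [TopologicalSpace X] [PseudoMetricSpace Ω]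
    {f : ℕ → X → Ω} (hf : ∀ n, Continuous (f n)) (ε : ℝ) (r : ℕ) :
    IsOpen {x | RepeatsWithin (fun n => f n x) ε r} := by
  have hunion : {x | RepeatsWithin (fun n => f n x) ε r} =
      ⋃ q > 0, ⋂ n ∈ Set.Iic (r * q), {x | dist (f n x) (f (n + q) x) < ε} := by
    ext; simp [RepeatsWithin]
  rw [hunion]
  exact isOpen_biUnion fun q _ => (Set.finite_Iic _).isOpen_biInter fun n _ =>
    isOpen_lt ((hf n).dist (hf (n + q))) continuous_const

theorem stmt1 {X : Type*} [TopologicalSpace X] {Ω : Type*} [MetricSpace Ω]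
    (f : ℕ → X → Ω) (hf : ∀ n, Continuous (f n)) :
    IsGδ { x : X | HasRP (fun n => f n x) } := by
  have hset : { x : X | HasRP (fun n => f n x) } =
      ⋂ (k : ℕ) (r : ℕ), {x | RepeatsWithin (fun n => f n x) (1 / (k + 1)) (r + 1)} := by
    ext x
    simp only [Set.mem_ofPred_eq, Set.mem_iInter, hasRP_iff_forall_repeatsWithin]
  rw [hset]
  exact .iInter fun k => .iInter fun r => (isOpen_setOf_repeatsWithin hf _ _).isGδ
end

section
/- If Ω is a metric space and T : Ω → Ω is continuous, then the set PRP(T) = { ω ∈ Ω : the sequence {T^n ω}_{n≥0} has the repetition property } is a G_δ subset of Ω. -/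
open Filter MeasureTheory

theorem hasRP_iff_forall_one_div {Ω : Type*} [MetricSpace Ω] {ω : ℕ → Ω} :
    HasRP ω ↔ ∀ k : ℕ, ∀ r : ℕ, 0 < r → ∃ q : ℕ, 0 < q ∧
      ∀ n ≤ r * q, dist (ω n) (ω (n + q)) < 1 / ((k : ℝ) + 1) := by
  refine ⟨fun h k => h _ Nat.one_div_pos_of_nat, fun h ε hε r hr => ?_⟩
  obtain ⟨k, hk⟩ := exists_nat_one_div_lt hε
  obtain ⟨q, hq, hdist⟩ := h k r hr
  exact ⟨q, hq, fun n hn => (hdist n hn).trans hk⟩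

section
variable {X Ω : Type*} [TopologicalSpace X] [MetricSpace Ω] {f : ℕ → X → Ω}

theorem isOpen_setOf_forall_le_dist_lt (hf : ∀ n, Continuous (f n)) (N q : ℕ) (ε : ℝ) :
    IsOpen {x | ∀ n ≤ N, dist (f n x) (f (n + q) x) < ε} := by
  simp only [Set.ofPred_forall]
  exact (Set.finite_Iic N).isOpen_biInter fun n _ =>
    isOpen_lt ((hf n).dist (hf (n + q))) continuous_const

theorem isGδ_setOf_hasRP (hf : ∀ n, Continuous (f n)) : IsGδ {x | HasRP fun n => f n x} := by
  have hset : {x | HasRP fun n => f n x} = ⋂ (k : ℕ) (r : ℕ) (_ : 0 < r), ⋃ (q : ℕ) (_ : 0 < q),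
      {x | ∀ n ≤ r * q, dist (f n x) (f (n + q) x) < 1 / ((k : ℝ) + 1)} := by
    ext x
    simp only [Set.mem_ofPred_eq, hasRP_iff_forall_one_div, Set.mem_iInter, Set.mem_iUnion,
      exists_prop]
  rw [hset]
  exact .iInter fun k => .iInter fun r => .iInter fun _ => IsOpen.isGδ <|
    isOpen_iUnion fun q => isOpen_iUnion fun _ => isOpen_setOf_forall_le_dist_lt hf _ _ _
end

theorem stmt2 {Ω : Type*} [MetricSpace Ω] (T : Ω → Ω) (hT : Continuous T) :
    IsGδ { ω : Ω | HasRP (fun n => T^[n] ω) } :=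
  isGδ_setOf_hasRP hT.iterate
end

section
/- Let {ω_n} be a sequence in a metric space Ω with the repetition property. Then the set of sequences {ω'_n} in a metric space Ω' such that {ω_n} and {ω'_n} have the joint repetition property is closed under uniform convergence: if sequences {ω'^{(k)}_n} each have the joint repetition property with {ω_n} and ω'^{(k)}_n → ω'_n uniformly in n as k → ∞, then {ω'_n} has the joint repetition property with {ω_n}. -/
open Filter MeasureTheory

lemma dist_lt_add_of_dist_lt {α : Type*} [PseudoMetricSpace α] {a b a' b' : α} {δ η : ℝ}
    (ha : dist a a' < δ) (hb : dist b b' < δ) (hab : dist a b < η) :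
    dist a' b' < δ + η + δ :=
  calc dist a' b' ≤ dist a' a + dist a b + dist b b' := dist_triangle4 _ _ _ _
    _ < δ + η + δ := by rw [dist_comm a']; gcongr

lemma jointRP_of_forall_exists_dist_lt {Ω Ω' : Type*} [MetricSpace Ω] [MetricSpace Ω']
    {ω : ℕ → Ω} {ω' : ℕ → Ω'}
    (h : ∀ δ > 0, ∃ v : ℕ → Ω', JointRP ω v ∧ ∀ n, dist (v n) (ω' n) < δ) :
    JointRP ω ω' := by
  intro ε hε r hr
  obtain ⟨v, hv, hvω'⟩ := h (ε / 3) (by positivity)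
  obtain ⟨q, hq, hωq, hvq⟩ := hv (ε / 3) (by positivity) r hr
  refine ⟨q, hq, fun n hn => (hωq n hn).trans (by linarith), fun n hn => ?_⟩
  calc dist (ω' n) (ω' (n + q)) < ε / 3 + ε / 3 + ε / 3 :=
        dist_lt_add_of_dist_lt (hvω' n) (hvω' (n + q)) (hvq n hn)
    _ = ε := by ring

theorem stmt5_general {Ω Ω' : Type*} [MetricSpace Ω] [MetricSpace Ω']
    (ω : ℕ → Ω) (W : ℕ → ℕ → Ω') (ω' : ℕ → Ω')
    (hW : ∀ k, JointRP ω (W k)) (hconv : TendstoUniformly W ω' atTop) :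
    JointRP ω ω' := by
  refine jointRP_of_forall_exists_dist_lt fun δ hδ => ?_
  obtain ⟨k, hk⟩ := (Metric.tendstoUniformly_iff.mp hconv δ hδ).exists
  exact ⟨W k, hW k, fun n => by rw [dist_comm]; exact hk n⟩

theorem stmt5 {Ω Ω' : Type*} [MetricSpace Ω] [MetricSpace Ω']
    (ω : ℕ → Ω) (hω : HasRP ω) (W : ℕ → ℕ → Ω') (ω' : ℕ → Ω')
    (hW : ∀ k, JointRP ω (W k)) (hconv : TendstoUniformly W ω' atTop) :
    JointRP ω ω' :=
  stmt5_general ω W ω' hW hconv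
end

section
/- If {ω_n}_{n≥0} is a sequence in the circle 𝕋 with the repetition property, then for every positive integer l, the subsampled sequence {ω_{nl}}_{n≥0} has the repetition property. -/
/-!
Given `ε` and `r`, apply the repetition property of `ω` with tolerance `ε / (l + 1)` and the
larger range `(r + 1) * l`. For the period `q` it returns, `l` consecutive jumps of length `q`
move `ω (n * l)` to `ω ((n + q) * l)` while staying in that range, so the triangle inequality
bounds the distance by `l * ε / (l + 1) < ε`.
-/

open Filter MeasureTheory

lemma dist_add_mul_le_of_dist_add_le {Ω : Type*} [PseudoMetricSpace Ω] {ω : ℕ → Ω}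
    {q N : ℕ} {δ : ℝ} (h : ∀ n ≤ N, dist (ω n) (ω (n + q)) ≤ δ) {n k : ℕ}
    (hk : n + k * q ≤ N) : dist (ω n) (ω (n + k * q)) ≤ k * δ := by
  have hsteps : ∀ {i}, i < k → dist (ω (n + i * q)) (ω (n + (i + 1) * q)) ≤ δ := by
    intro i hi
    have hle : n + i * q ≤ N := le_trans (by gcongr) hk
    simpa [add_mul, add_assoc] using h _ hle
  simpa using dist_le_range_sum_of_dist_le (f := fun i => ω (n + i * q)) k hsteps

namespace HasRP

variable {Ω : Type*} [MetricSpace Ω] {ω : ℕ → Ω}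

lemma exists_period (h : HasRP ω) {ε : ℝ} (hε : 0 < ε) (r : ℕ) :
    ∃ q, 0 < q ∧ ∀ n ≤ r * q, dist (ω n) (ω (n + q)) < ε := by
  obtain ⟨q, hq, hω⟩ := h ε hε (r + 1) r.succ_pos
  exact ⟨q, hq, fun n hn => hω n (hn.trans (Nat.mul_le_mul_right q r.le_succ))⟩

theorem comp_mul_right (h : HasRP ω) (l : ℕ) : HasRP (fun n => ω (n * l)) := by
  intro ε hε r _
  set δ := ε / (l + 1)
  obtain ⟨q, hq, hω⟩ := h.exists_period (ε := δ) (by positivity) ((r + 1) * l)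
  refine ⟨q, hq, fun n hn => ?_⟩
  have hrange : n * l + l * q ≤ (r + 1) * l * q := by nlinarith
  have hlδ : l * δ < ε := by
    rw [mul_div_assoc', div_lt_iff₀ (by positivity)]
    nlinarith
  calc dist (ω (n * l)) (ω ((n + q) * l))
      = dist (ω (n * l)) (ω (n * l + l * q)) := by ring_nf
    _ ≤ l * δ := dist_add_mul_le_of_dist_add_le (fun m hm => (hω m hm).le) hrange
    _ < ε := hlδ

end HasRP

theorem stmt7_general (ω : ℕ → UnitAddCircle) (hω : HasRP ω) (l : ℕ) :
    HasRP (fun n => ω (n * l)) :=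
  hω.comp_mul_right l

theorem stmt7 (ω : ℕ → UnitAddCircle) (hω : HasRP ω) (l : ℕ) (hl : 0 < l) :
    HasRP (fun n => ω (n * l)) :=
  stmt7_general ω hω l
end

section
/- If {ω_n}_{n≥0} is a sequence in a metric space with the repetition property, then for every α ∈ 𝕋 the sequences {ω_n} and {nα}_{n≥0} in 𝕋 have the joint repetition property. -/
/-!
Chaining the repetition property along the multiples `q, 2q, …, kq` of one period `q`
costs at most a factor `k`, so a single application of the repetition property (with a
smaller `ε` and a longer range) makes every multiple `jq`, `j ≤ k`, a good period for `ω`.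
By Dirichlet's approximation theorem one of these multiples also satisfies
`‖jq • α‖ ≤ 1 / (k + 1)`, and on the circle `dist (n • α) ((n + jq) • α) = ‖jq • α‖`.
-/

open Filter MeasureTheory

theorem dist_add_mul_le_of_forall_dist_add_le {α : Type*} [PseudoMetricSpace α] {ω : ℕ → α}
    {q N : ℕ} {δ : ℝ} (h : ∀ n ≤ N, dist (ω n) (ω (n + q)) ≤ δ) {m n : ℕ}
    (hmn : n + m * q ≤ N + q) : dist (ω n) (ω (n + m * q)) ≤ m * δ := by
  have hchain := dist_le_range_sum_of_dist_le (f := fun i => ω (n + i * q)) m (d := fun _ => δ)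
    fun {k} hk => by
      have hkq : k * q + q ≤ m * q := by simpa [add_mul] using Nat.mul_le_mul_right q hk
      simpa [add_mul, add_assoc] using h (n + k * q) (by omega)
  simpa using hchain

theorem HasRP.exists_forall_mul_dist_lt {Ω : Type*} [MetricSpace Ω] {ω : ℕ → Ω} (hω : HasRP ω)
    {ε : ℝ} (hε : 0 < ε) (r k : ℕ) :
    ∃ q : ℕ, 0 < q ∧ ∀ j ≤ k, ∀ n ≤ r * (j * q), dist (ω n) (ω (n + j * q)) < ε := by
  obtain ⟨q, hq, hωq⟩ := hω (ε / (k + 1)) (by positivity) ((r + 1) * (k + 1)) (by positivity)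
  refine ⟨q, hq, fun j hjk n hn => ?_⟩
  have hrange : n + j * q ≤ (r + 1) * (k + 1) * q + q := by
    have : (r + 1) * (j * q) ≤ (r + 1) * ((k + 1) * q) :=
      Nat.mul_le_mul_left _ (Nat.mul_le_mul_right _ (by omega))
    linarith
  calc dist (ω n) (ω (n + j * q))
      ≤ j * (ε / (k + 1)) :=
        dist_add_mul_le_of_forall_dist_add_le (fun n hn => (hωq n hn).le) hrange
    _ ≤ k * (ε / (k + 1)) := by gcongr
    _ < ε := by
      rw [mul_div_assoc', div_lt_iff₀ (by positivity)]
      linarith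

theorem dist_nsmul_add_nsmul {E : Type*} [SeminormedAddCommGroup E] (a : E) (n p : ℕ) :
    dist (n • a) ((n + p) • a) = ‖p • a‖ := by
  rw [add_smul, dist_self_add_right]

theorem stmt9 {Ω : Type*} [MetricSpace Ω] (ω : ℕ → Ω) (hω : HasRP ω)
    (α : UnitAddCircle) : JointRP ω (fun n => n • α) := by
  intro ε hε r _
  obtain ⟨k, hk⟩ := exists_nat_one_div_lt hε
  obtain ⟨q, hq, hωq⟩ := hω.exists_forall_mul_dist_lt hε r (k + 1)
  obtain ⟨j, ⟨hj, hjk⟩, hjα⟩ := AddCircle.exists_norm_nsmul_le (q • α) k.succ_pos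
  refine ⟨j * q, Nat.mul_pos hj hq, hωq j hjk, fun n _ => ?_⟩
  calc dist (n • α) ((n + j * q) • α) = ‖j • q • α‖ := by rw [dist_nsmul_add_nsmul, mul_smul]
    _ ≤ 1 / (k + 1 + 1) := by simpa using hjα
    _ ≤ 1 / (k + 1) := by gcongr; linarith
    _ < ε := hk
end

section
/- If {ω_n}_{n≥0} is a sequence in 𝕋 with the repetition property, then for all α, β ∈ 𝕋 the sequences {ω_n} and {ω_n + nα + β}_{n≥0} have the joint repetition property. -/
open Filter MeasureTheory

/-!
If `q` is a repetition period of `ω` with accuracy `δ / N`, the triangle inequality makes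
every multiple `k * q` with `k ≤ N` a repetition period with accuracy `δ`. Adding `n • α + β`
to `ω n` spoils a period `Q` by at most `‖Q • α‖`, and Dirichlet's approximation theorem
gives, whatever `q` is, some `1 ≤ k ≤ N` with `‖(k * q) • α‖ ≤ 1 / (N + 1)`. So `N` is chosen
from `ε` first, then `q` from the repetition property of `ω`, and `k * q` is a joint period.
-/

lemma HasRP.exists_forall_le_dist_mul_le {Ω : Type*} [MetricSpace Ω] {ω : ℕ → Ω}
    (hω : HasRP ω) {δ : ℝ} (hδ : 0 < δ) {N : ℕ} (hN : 0 < N) (r : ℕ) :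
    ∃ q : ℕ, 0 < q ∧ ∀ k ≤ N, ∀ n ≤ r * (k * q), dist (ω n) (ω (n + k * q)) ≤ δ := by
  obtain ⟨q, hq, hrep⟩ := hω (δ / N) (by positivity) ((r + 1) * N) (by positivity)
  refine ⟨q, hq, fun k hk n hn => ?_⟩
  have hstep : ∀ {i}, i < k → dist (ω (n + i * q)) (ω (n + (i + 1) * q)) ≤ δ / N := by
    intro i hi
    have hidx : n + i * q ≤ (r + 1) * N * q := by
      have : r * (k * q) + i * q ≤ r * (N * q) + N * q := by gcongr; omega
      linarith
    simpa [add_mul, add_assoc] using (hrep _ hidx).le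
  calc dist (ω n) (ω (n + k * q))
      ≤ ∑ _i ∈ Finset.range k, δ / N := by
        simpa using dist_le_range_sum_of_dist_le (f := fun i => ω (n + i * q)) k hstep
    _ = k * (δ / N) := by simp
    _ ≤ N * (δ / N) := by gcongr
    _ = δ := by field_simp

lemma dist_add_nsmul_add_le {G : Type*} [SeminormedAddCommGroup G] (x y α β : G) (n Q : ℕ) :
    dist (x + n • α + β) (y + (n + Q) • α + β) ≤ dist x y + ‖Q • α‖ := by
  rw [dist_eq_norm, dist_eq_norm]
  calc ‖x + n • α + β - (y + (n + Q) • α + β)‖ = ‖(x - y) - Q • α‖ := by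
        rw [add_nsmul]; abel_nf
    _ ≤ ‖x - y‖ + ‖Q • α‖ := norm_sub_le _ _

theorem stmt10 (ω : ℕ → UnitAddCircle) (hω : HasRP ω) (α β : UnitAddCircle) :
    JointRP ω (fun n => ω n + n • α + β) := by
  intro ε hε r _
  obtain ⟨N, hN⟩ := exists_nat_gt (2 / ε)
  have hNpos : (0 : ℝ) < N := (by positivity : (0 : ℝ) < 2 / ε).trans hN
  have hinvN : (1 : ℝ) / (N + 1 : ℕ) < ε / 2 := by
    rw [div_lt_iff₀ hε] at hN
    rw [div_lt_div_iff₀ (by positivity) two_pos]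
    push_cast; linarith
  obtain ⟨q, hq, hrep⟩ := hω.exists_forall_le_dist_mul_le (half_pos hε) (by exact_mod_cast hNpos) r
  obtain ⟨k, ⟨hk, hkN⟩, hkα⟩ := AddCircle.exists_norm_nsmul_le (q • α) (by exact_mod_cast hNpos)
  rw [← mul_nsmul'] at hkα
  refine ⟨k * q, Nat.mul_pos hk hq, fun n hn => (hrep k hkN n hn).trans_lt (half_lt_self hε), ?_⟩
  intro n hn
  calc dist (ω n + n • α + β) (ω (n + k * q) + (n + k * q) • α + β)
      ≤ dist (ω n) (ω (n + k * q)) + ‖(k * q) • α‖ := dist_add_nsmul_add_le _ _ _ _ _ _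
    _ < ε / 2 + ε / 2 := add_lt_add_of_le_of_lt (hrep k hkN n hn) (hkα.trans_lt hinvN)
    _ = ε := add_halves ε
end

section
/- Let {ω_n}_{n≥0} be a real sequence whose projection to 𝕋 = ℝ/ℤ has the repetition property, and suppose there exist integers k ≥ 1 and a_1, ..., a_k with |a_k| = 1 such that ω_n + a_1 ω_{n−1} + ... + a_k ω_{n−k} = 0 for all n ≥ k. Then for every rational number r, the projection to 𝕋 of the sequence {r ω_n}_{n≥0} has the repetition property, jointly with the original projected sequence. -/
/-!
Take `q` from the repetition property of `ω` with a small tolerance `δ` and let `m n` be the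
integer nearest to `ω (n + q) - ω n`. These differences satisfy the recurrence of `ω`, and as the
errors are small the integers `m n` satisfy it exactly. Reduced modulo `d = r.den` the recurrence
has a unit as top coefficient, so its companion map on `(ZMod d)^k` is a permutation and `m` is
periodic modulo `d` with period dividing `P = (d ^ k)!`. Over `d * P` consecutive steps of length
`q` the integers `m` therefore add up to a multiple `M` of `d`, and `Q = d * P * q` is a common
return time: `ω (n + Q) - ω n` is close to `M`, and `r` times it is close to the integer `r * M`.
-/

open Filter MeasureTheory

open Finset Function
open scoped Nat

namespace UnitAddCircle

theorem dist_coe_coe (x y : ℝ) :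
    dist (x : UnitAddCircle) (y : UnitAddCircle) = |y - x - round (y - x)| := by
  rw [dist_comm, dist_eq_norm, ← AddCircle.coe_sub, norm_eq]

theorem dist_coe_coe_le (x y : ℝ) (m : ℤ) :
    dist (x : UnitAddCircle) (y : UnitAddCircle) ≤ |y - x - m| := by
  rw [dist_coe_coe]
  exact round_le _ m

theorem dist_ratCast_mul_coe_le (r : ℚ) (x y : ℝ) {M : ℤ} (hM : (r.den : ℤ) ∣ M) :
    dist ((r * x : ℝ) : UnitAddCircle) ((r * y : ℝ) : UnitAddCircle) ≤ |(r : ℝ)| * |y - x - M| := by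
  obtain ⟨e, rfl⟩ := hM
  calc _ ≤ |r * y - r * x - (r.num * e : ℤ)| := dist_coe_coe_le _ _ _
    _ = |(r : ℝ)| * |y - x - (r.den * e : ℤ)| := by
      rw [← abs_mul]
      congr 1
      push_cast
      rw [Rat.cast_def]
      field_simp

end UnitAddCircle

theorem Function.Injective.iterate_eq_id_of_factorial_card_dvd {α : Type*} [Fintype α]
    [DecidableEq α] {f : α → α} (hf : Injective f) {t : ℕ} (ht : (Fintype.card α)! ∣ t) :
    f^[t] = id := by
  obtain ⟨c, rfl⟩ := ht
  set e := Equiv.ofBijective f hf.bijective_of_finite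
  have he : e ^ (Fintype.card α)! = 1 := Fintype.card_perm (α := α) ▸ pow_card_eq_one
  have hfe : f^[(Fintype.card α)!] = id := by
    rw [show f = e from rfl, Equiv.Perm.iterate_eq_pow, he, Equiv.Perm.coe_one]
  rw [iterate_mul, hfe, iterate_id]

theorem apply_add_eq_iterate {α : Type*} {f : α → α} {S : ℕ → α} {N : ℕ}
    (hS : ∀ n < N, S (n + 1) = f (S n)) {n t : ℕ} (hnt : n + t ≤ N) :
    S (n + t) = f^[t] (S n) := by
  induction t with
  | zero => rfl
  | succ t ih =>
    rw [iterate_succ_apply', ← ih (by omega), ← add_assoc, hS _ (by omega)]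

theorem Finset.sum_range_mul_mod {M : Type*} [AddCommMonoid M] (f : ℕ → M) (p c : ℕ) :
    ∑ j ∈ range (c * p), f (j % p) = c • ∑ j ∈ range p, f j := by
  induction c with
  | zero => simp
  | succ c ih =>
    rw [add_mul, one_mul, sum_range_add, ih, succ_nsmul]
    congr 1
    refine sum_congr rfl fun j hj => ?_
    rw [Nat.mul_add_mod', Nat.mod_eq_of_lt (mem_range.mp hj)]

theorem natCast_dvd_sum_range_mul {d P : ℕ} {m : ℕ → ℤ}
    (hm : ∀ j < d * P, (m j : ZMod d) = m (j % P)) : (d : ℤ) ∣ ∑ j ∈ range (d * P), m j := by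
  rw [← ZMod.intCast_zmod_eq_zero_iff_dvd, Int.cast_sum,
    sum_congr rfl fun j hj => hm j (mem_range.mp hj),
    sum_range_mul_mod (fun j => (m j : ZMod d)), nsmul_eq_mul, ZMod.natCast_self, zero_mul]

theorem abs_sub_sub_sum_lt {ω : ℕ → ℝ} {m : ℕ → ℤ} {n₀ q s : ℕ} {δ : ℝ} (hs : 0 < s)
    (hm : ∀ j < s, |ω (n₀ + j * q + q) - ω (n₀ + j * q) - m j| < δ) :
    |ω (n₀ + s * q) - ω n₀ - ∑ j ∈ range s, m j| < s * δ := by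
  have htel : ω (n₀ + s * q) - ω n₀ - ∑ j ∈ range s, (m j : ℝ)
      = ∑ j ∈ range s, (ω (n₀ + j * q + q) - ω (n₀ + j * q) - m j) := by
    have h := sum_range_sub (fun j => ω (n₀ + j * q)) s
    simp only [add_mul, one_mul, ← add_assoc, zero_mul, add_zero] at h
    rw [sum_sub_distrib, h]
  push_cast
  rw [htel]
  calc _ ≤ ∑ j ∈ range s, |ω (n₀ + j * q + q) - ω (n₀ + j * q) - m j| := abs_sum_le_sum_abs _ _
    _ < ∑ _j ∈ range s, δ :=
      sum_lt_sum_of_nonempty (nonempty_range_iff.mpr hs.ne') fun j hj => hm j (mem_range.mp hj)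
    _ = s * δ := by rw [sum_const, card_range, nsmul_eq_mul]

section Recurrence

variable {R : Type*} [CommRing R] {k : ℕ}

/-- The companion map of `u (n + k) = ∑ j, b j * u (n + j)`: it sends the window
`(u n, …, u (n + k - 1))` to the next one. -/
def recurrenceStep (b : Fin k → R) (v : Fin k → R) : Fin k → R :=
  fun i => if h : (i : ℕ) + 1 < k then v ⟨i + 1, h⟩ else ∑ j, b j * v j

theorem recurrenceStep_injective [NeZero k] {b : Fin k → R} (hb : IsUnit (b 0)) :
    Injective (recurrenceStep b) := by
  intro v w h
  have hshift : ∀ i : Fin k, (i : ℕ) ≠ 0 → v i = w i := by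
    rintro ⟨i, hi⟩ hi0
    obtain ⟨j, rfl⟩ := Nat.exists_eq_succ_of_ne_zero hi0
    simpa [recurrenceStep, hi] using congrFun h ⟨j, by omega⟩
  have hsum : ∑ j, b j * v j = ∑ j, b j * w j := by
    have hk := Nat.pos_of_neZero k
    simpa [recurrenceStep, show k - 1 + 1 = k by omega] using congrFun h ⟨k - 1, by omega⟩
  have hzero : v 0 = w 0 := by
    have hrest : ∑ j ∈ univ.erase 0, b j * v j = ∑ j ∈ univ.erase 0, b j * w j :=
      sum_congr rfl fun j hj => by
        rw [hshift j fun h0 => ne_of_mem_erase hj (Fin.ext (by simpa using h0))]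
    rw [← add_sum_erase _ _ (mem_univ 0), ← add_sum_erase _ _ (mem_univ 0), hrest] at hsum
    exact hb.mul_left_cancel (add_right_cancel hsum)
  funext i
  by_cases hi : (i : ℕ) = 0
  · rwa [show i = 0 from Fin.ext hi]
  · exact hshift i hi

theorem apply_add_eq_of_recurrence [Fintype R] [DecidableEq R] [NeZero k] {b : Fin k → R}
    (hb : IsUnit (b 0)) {u : ℕ → R} {N : ℕ} (hu : ∀ n < N, u (n + k) = ∑ j, b j * u (n + j))
    {n t : ℕ} (ht : (Fintype.card R ^ k)! ∣ t) (hnt : n + t ≤ N) : u (n + t) = u n := by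
  set S : ℕ → Fin k → R := fun n i => u (n + i)
  have hS : ∀ n < N, S (n + 1) = recurrenceStep b (S n) := by
    intro n hn
    funext i
    simp only [S, recurrenceStep]
    split_ifs with hi
    · rw [add_right_comm, add_assoc]
    · rw [show n + 1 + i = n + k by omega, hu n hn]
  have hT := (recurrenceStep_injective hb).iterate_eq_id_of_factorial_card_dvd
    (by simpa using ht)
  simpa [S, hT] using congrFun (apply_add_eq_iterate hS hnt) 0

theorem eq_sum_fin_of_recurrence {a u : ℕ → R} {n : ℕ}
    (h : u (n + k) + ∑ i ∈ Icc 1 k, a i * u (n + k - i) = 0) :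
    u (n + k) = ∑ j : Fin k, -a (k - j) * u (n + j) := by
  have hreflect : ∑ i ∈ Icc 1 k, a i * u (n + k - i) = ∑ j ∈ range k, a (k - j) * u (n + j) :=
    sum_nbij' (fun i => k - i) (fun j => k - j) (by simp; omega) (by simp; omega)
      (by simp; omega) (by simp; omega) fun i hi => by
        simp only [mem_Icc] at hi
        rw [show k - (k - i) = i by omega, show n + (k - i) = n + k - i by omega]
  rw [Fin.sum_univ_eq_sum_range (fun j => -a (k - j) * u (n + j))]
  simp only [neg_mul, sum_neg_distrib]
  rw [← hreflect]
  exact eq_neg_of_add_eq_zero_left h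

theorem recurrence_sub_shift {a u : ℕ → R}
    (h : ∀ n, k ≤ n → u n + ∑ i ∈ Icc 1 k, a i * u (n - i) = 0) (q : ℕ) {n : ℕ} (hn : k ≤ n) :
    (u (n + q) - u n) + ∑ i ∈ Icc 1 k, a i * (u (n - i + q) - u (n - i)) = 0 := by
  have hq := h (n + q) (by omega)
  rw [sum_congr rfl fun i hi => by rw [show n + q - i = n - i + q by simp at hi; omega]] at hq
  simp only [mul_sub, sum_sub_distrib]
  linear_combination hq - h n hn

end Recurrence

theorem recurrence_round {k N : ℕ} {a : ℕ → ℤ} {x : ℕ → ℝ} {δ : ℝ}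
    (hx : ∀ n, k ≤ n → x n + ∑ i ∈ Icc 1 k, (a i : ℝ) * x (n - i) = 0)
    (hδ : (1 + ∑ i ∈ Icc 1 k, |(a i : ℝ)|) * δ < 1) (hround : ∀ n ≤ N, |x n - round (x n)| < δ)
    {n : ℕ} (hkn : k ≤ n) (hnN : n ≤ N) :
    round (x n) + ∑ i ∈ Icc 1 k, a i * round (x (n - i)) = 0 := by
  set e : ℕ → ℝ := fun n => x n - round (x n)
  have hz : ((round (x n) + ∑ i ∈ Icc 1 k, a i * round (x (n - i)) : ℤ) : ℝ)
      = -(e n + ∑ i ∈ Icc 1 k, (a i : ℝ) * e (n - i)) := by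
    simp only [e, mul_sub, sum_sub_distrib]
    push_cast
    linear_combination hx n hkn
  have hsum : ∑ i ∈ Icc 1 k, |(a i : ℝ) * e (n - i)| ≤ (∑ i ∈ Icc 1 k, |(a i : ℝ)|) * δ := by
    rw [sum_mul]
    refine sum_le_sum fun i hi => ?_
    rw [abs_mul]
    exact mul_le_mul_of_nonneg_left (hround _ (by omega)).le (abs_nonneg _)
  rw [← Int.abs_lt_one_iff, ← Int.cast_lt (R := ℝ), Int.cast_abs, hz, abs_neg, Int.cast_one]
  calc _ ≤ |e n| + ∑ i ∈ Icc 1 k, |(a i : ℝ) * e (n - i)| :=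
        (abs_add_le _ _).trans (by gcongr; exact abs_sum_le_sum_abs _ _)
    _ < δ + (∑ i ∈ Icc 1 k, |(a i : ℝ)|) * δ := add_lt_add_of_lt_of_le (hround n hnN) hsum
    _ < 1 := by linarith

theorem exists_dvd_near_return {ω : ℕ → ℝ} {k : ℕ} (hk : 1 ≤ k) {a : ℕ → ℤ} (hak : |a k| = 1)
    (hrec : ∀ n, k ≤ n → ω n + ∑ i ∈ Icc 1 k, (a i : ℝ) * ω (n - i) = 0)
    {d q N : ℕ} [NeZero d] {δ : ℝ} (hδ : (1 + ∑ i ∈ Icc 1 k, |(a i : ℝ)|) * δ < 1)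
    (hq : ∀ n ≤ N, dist (ω n : UnitAddCircle) (ω (n + q)) < δ)
    {n₀ : ℕ} (hn₀ : n₀ + (d * (d ^ k)! + (d ^ k)!) * q + k ≤ N) :
    ∃ M : ℤ, (d : ℤ) ∣ M ∧ |ω (n₀ + d * (d ^ k)! * q) - ω n₀ - M| < (d * (d ^ k)! : ℕ) * δ := by
  have : NeZero k := ⟨by omega⟩
  set P := (d ^ k)!
  set m : ℕ → ℤ := fun n => round (ω (n + q) - ω n)
  have hnear : ∀ n ≤ N, |ω (n + q) - ω n - m n| < δ := fun n hn =>
    (UnitAddCircle.dist_coe_coe _ _).symm.trans_lt (hq n hn)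
  have hmrec : ∀ n, k ≤ n → n ≤ N → m n + ∑ i ∈ Icc 1 k, a i * m (n - i) = 0 :=
    fun n => recurrence_round (fun n => recurrence_sub_shift hrec q) hδ hnear
  have hfwd : ∀ n < N - k,
      (m (n + k) : ZMod d) = ∑ j : Fin k, -((a (k - j) : ℤ) : ZMod d) * m (n + j) := by
    intro n hn
    refine eq_sum_fin_of_recurrence (u := fun n => (m n : ZMod d))
      (a := fun i => (a i : ZMod d)) ?_
    exact_mod_cast congrArg (Int.cast : ℤ → ZMod d) (hmrec (n + k) (by omega) (by omega))
  have hunit : IsUnit (-((a (k - (0 : Fin k)) : ℤ) : ZMod d)) := by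
    simpa using ((Int.isUnit_iff_abs_eq.mpr hak).map (Int.castRingHom (ZMod d))).neg
  have hper : ∀ n t, P ∣ t → n + t ≤ N - k → (m (n + t) : ZMod d) = m n := fun n t ht hnt =>
    apply_add_eq_of_recurrence (u := fun n => (m n : ZMod d)) hunit hfwd (by rwa [ZMod.card d]) hnt
  have hjq : ∀ j < d * P, n₀ + j * q + q ≤ N - k := fun j hj => by
    have := Nat.mul_le_mul_right q (show j + 1 ≤ d * P by omega)
    rw [add_mul] at this hn₀
    omega
  refine ⟨∑ j ∈ range (d * P), m (n₀ + j * q), natCast_dvd_sum_range_mul fun j hj => ?_,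
    abs_sub_sub_sum_lt (s := d * P) (Nat.mul_pos (NeZero.pos d) (Nat.factorial_pos _)) fun j hj =>
      hnear (n₀ + j * q) (by have := hjq j hj; omega)⟩
  have hsplit : n₀ + j % P * q + j / P * q * P = n₀ + j * q := by
    nth_rewrite 3 [← Nat.mod_add_div j P]
    ring
  rw [← hsplit]
  exact hper _ _ (dvd_mul_left _ _) (by have := hjq j hj; omega)

theorem stmt12 (ω : ℕ → ℝ) (hω : HasRP (fun n => ((ω n : ℝ) : UnitAddCircle)))
    (k : ℕ) (hk : 1 ≤ k) (a : ℕ → ℤ) (hak : |a k| = 1)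
    (hrec : ∀ n, k ≤ n → ω n + ∑ i ∈ Finset.Icc 1 k, (a i : ℝ) * ω (n - i) = 0)
    (r : ℚ) :
    JointRP (fun n => ((ω n : ℝ) : UnitAddCircle))
      (fun n => (((r : ℝ) * ω n : ℝ) : UnitAddCircle)) := by
  intro ε hε R _
  set d := r.den
  set s := d * (d ^ k)!
  have hs : (0 : ℝ) < s := by positivity
  set A := 1 + ∑ i ∈ Icc 1 k, |(a i : ℝ)|
  have hA : 0 < A := by positivity
  set δ := min (1 / (2 * A)) (ε / (s * (1 + |(r : ℝ)|)))
  have hδ : 0 < δ := by positivity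
  have hAδ : A * δ < 1 :=
    calc A * δ ≤ A * (1 / (2 * A)) := by gcongr; exact min_le_left _ _
      _ = 1 / 2 := by field_simp
      _ < 1 := by norm_num
  have hsδ : s * δ * (1 + |(r : ℝ)|) ≤ ε := by
    have := (min_le_right _ _ : δ ≤ ε / (s * (1 + |(r : ℝ)|)))
    rw [le_div_iff₀ (by positivity)] at this
    linarith
  obtain ⟨q, hq, hdist⟩ := hω δ hδ ((R + 2) * s + k) (by positivity)
  have hreturn : ∀ n ≤ R * (s * q), ∃ M : ℤ, (d : ℤ) ∣ M ∧ |ω (n + s * q) - ω n - M| < s * δ := by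
    intro n hn
    have : NeZero d := ⟨r.den_nz⟩
    have hwindow : n + (s + (d ^ k)!) * q + k ≤ ((R + 2) * s + k) * q := by
      have hP : (d ^ k)! ≤ s := Nat.le_mul_of_pos_left _ r.den_pos
      have := Nat.mul_le_mul_right q hP
      have := Nat.le_mul_of_pos_right k hq
      nlinarith
    exact exists_dvd_near_return hk hak hrec hAδ hdist hwindow
  refine ⟨s * q, by positivity, fun n hn => ?_, fun n hn => ?_⟩ <;>
    obtain ⟨M, hdM, hM⟩ := hreturn n hn
  · calc _ ≤ |ω (n + s * q) - ω n - M| := UnitAddCircle.dist_coe_coe_le _ _ M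
      _ < s * δ := hM
      _ ≤ ε := by nlinarith [abs_nonneg (r : ℝ)]
  · calc _ ≤ |(r : ℝ)| * |ω (n + s * q) - ω n - M| :=
          UnitAddCircle.dist_ratCast_mul_coe_le r _ _ hdM
      _ ≤ |(r : ℝ)| * (s * δ) := by gcongr
      _ < ε := by nlinarith [abs_nonneg (r : ℝ)]
end

section
/- For any real a and integer k ≥ 1: if there exists a sequence of positive integers q_m → ∞ with q_m^{k−1} ⟨a q_m⟩ → 0, then the sequence n ↦ a n^k mod 1 in 𝕋 has the repetition property. -/
open Filter MeasureTheory

/-!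
Write `a (n + q)^k - a n^k = S · (q a)` with `S = ∑_{i<k} (n + q)^i n^(k-1-i)` a natural number,
so the distance on the circle is at most `S ⟨q a⟩ ≤ k ((r + 1) q)^(k-1) ⟨q a⟩` for `n ≤ r q`.
Along the given sequence `q_m` this bound is a constant multiple of `q_m^(k-1) ⟨a q_m⟩ → 0`.
-/

theorem AddCircle.norm_coe_natCast_mul_le {p : ℝ} (m : ℕ) (x : ℝ) :
    ‖((m * x : ℝ) : AddCircle p)‖ ≤ m * ‖(x : AddCircle p)‖ := by
  rw [← nsmul_eq_mul, AddCircle.coe_nsmul]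
  exact norm_nsmul_le

theorem Nat.sum_pow_mul_pow_le {x y N : ℕ} (hx : x ≤ N) (hy : y ≤ N) (k : ℕ) :
    ∑ i ∈ Finset.range k, x ^ i * y ^ (k - 1 - i) ≤ k * N ^ (k - 1) := by
  have hterm : ∀ i ∈ Finset.range k, x ^ i * y ^ (k - 1 - i) ≤ N ^ (k - 1) := fun i hi =>
    calc x ^ i * y ^ (k - 1 - i) ≤ N ^ i * N ^ (k - 1 - i) := by gcongr
      _ = N ^ (k - 1) := by rw [← pow_add]; have := Finset.mem_range.mp hi; congr 1; omega
  simpa using Finset.sum_le_card_nsmul _ _ _ hterm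

theorem AddCircle.dist_coe_mul_pow_add_le {p : ℝ} (a : ℝ) (k n Q N : ℕ) (hN : n + Q ≤ N) :
    dist ((a * (n : ℝ) ^ k : ℝ) : AddCircle p) ((a * ((n + Q : ℕ) : ℝ) ^ k : ℝ) : AddCircle p) ≤
      k * (N : ℝ) ^ (k - 1) * ‖((Q * a : ℝ) : AddCircle p)‖ := by
  set S := ∑ i ∈ Finset.range k, (n + Q) ^ i * n ^ (k - 1 - i)
  have hdiff : a * ((n + Q : ℕ) : ℝ) ^ k - a * (n : ℝ) ^ k = (S : ℝ) * (Q * a) := by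
    have := geom_sum₂_mul ((n : ℝ) + Q) (n : ℝ) k
    push_cast [S]
    linear_combination (-a) * this
  have hS : (S : ℝ) ≤ k * (N : ℝ) ^ (k - 1) := by
    exact_mod_cast Nat.sum_pow_mul_pow_le hN (by omega) k
  calc _ = ‖((S * (Q * a) : ℝ) : AddCircle p)‖ := by
        rw [dist_comm, dist_eq_norm, ← AddCircle.coe_sub, hdiff]
    _ ≤ S * ‖((Q * a : ℝ) : AddCircle p)‖ := AddCircle.norm_coe_natCast_mul_le S _
    _ ≤ _ := by gcongr

theorem stmt15_general (a : ℝ) (k : ℕ) (q : ℕ → ℕ) (hq : ∀ m, 0 < q m)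
    (h0 : Tendsto (fun m => (q m : ℝ) ^ (k - 1) * ‖(((q m : ℝ) * a : ℝ) : UnitAddCircle)‖)
      atTop (nhds 0)) :
    HasRP (fun n => ((a * (n : ℝ) ^ k : ℝ) : UnitAddCircle)) := by
  intro ε hε r _
  have hlim : Tendsto (fun m => k * ((r : ℝ) + 1) ^ (k - 1) *
      ((q m : ℝ) ^ (k - 1) * ‖(((q m : ℝ) * a : ℝ) : UnitAddCircle)‖)) atTop (nhds 0) := by
    simpa using h0.const_mul (k * ((r : ℝ) + 1) ^ (k - 1))
  obtain ⟨m, hm⟩ := (hlim.eventually (gt_mem_nhds hε)).exists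
  refine ⟨q m, hq m, fun n hn => ?_⟩
  calc _ ≤ k * (((r + 1) * q m : ℕ) : ℝ) ^ (k - 1) * ‖(((q m : ℝ) * a : ℝ) : UnitAddCircle)‖ :=
        AddCircle.dist_coe_mul_pow_add_le a k n (q m) _ (by rw [add_mul, one_mul]; omega)
    _ = _ := by rw [Nat.cast_mul, mul_pow]; push_cast; ring
    _ < ε := hm

theorem stmt15 (a : ℝ) (k : ℕ) (hk : 1 ≤ k) (q : ℕ → ℕ) (hq : ∀ m, 0 < q m)
    (hqtop : Tendsto q atTop atTop)
    (h0 : Tendsto (fun m => (q m : ℝ) ^ (k - 1) * ‖(((q m : ℝ) * a : ℝ) : UnitAddCircle)‖)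
      atTop (nhds 0)) :
    HasRP (fun n => ((a * (n : ℝ) ^ k : ℝ) : UnitAddCircle)) :=
  stmt15_general a k q hq h0
end

section
/- Let T : 𝕋^k → 𝕋^k with k ≥ 3 be the skew-shift T(ω_1,...,ω_k) = (ω_1 + α, ω_2 + ω_1, ..., ω_k + ω_{k−1}) with α irrational. Then PRP(T) ≠ 𝕋^k, i.e., there exists ω ∈ 𝕋^k whose orbit {T^n ω} does not have the repetition property; in particular T does not have the global repetition property. -/
open Filter MeasureTheory

/-- The skew-shift on the k-dimensional torus. -/
noncomputable def skewShift (k : ℕ) (α : UnitAddCircle) (ω : Fin k → UnitAddCircle) : Fin k → UnitAddCircle :=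
  fun j => if h : (j : ℕ) = 0 then ω j + α else ω j + ω ⟨(j : ℕ) - 1, by have := j.isLt; omega⟩

/-- The orbit of ω under T has the repetition property, w.r.t. the sum metric on the torus. -/
def OrbitRP (k : ℕ) (T : (Fin k → UnitAddCircle) → Fin k → UnitAddCircle)
    (ω : Fin k → UnitAddCircle) : Prop :=
  ∀ ε > 0, ∀ r : ℕ, 0 < r → ∃ q : ℕ, 0 < q ∧ ∀ n ≤ r * q,
    ∑ j : Fin k, dist (T^[n] ω j) (T^[n + q] ω j) < ε

/-!
Take `ω = (β, 0, …, 0)` with `β` badly approximable. The third coordinate of `Tⁿ ω` is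
`C(n, 2) β + C(n, 3) α`, so its displacement `u n = x (n + q) - x n` has constant second
difference `q α`. If `‖u n‖ ≤ ε` on `[0, 2q]`, the small real lifts of `u` have second differences
that are congruent mod 1 and close, hence equal: the lift is a quadratic polynomial that is small
at `0, q, 2q`. Its coefficients are congruent to `q β + C(q, 2) α` and `q α`, and the combination
`2 (q β + C(q, 2) α) - (q - 1) q α = 2 q β` then gives `‖2 q β‖ = O(ε / q)`, contradicting bad
approximability.
-/

def BadlyApproximable (β : ℝ) : Prop :=
  ∃ c > 0, ∀ q : ℕ, 0 < q → c ≤ q * ‖((q * β : ℝ) : UnitAddCircle)‖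

open Real goldenRatio in
/-- `(m φ - p) (m ψ - p) = p² - m p - m²` is a nonzero integer, while `m ψ - p` is within
`m √5` of `m φ - p`. -/
theorem Real.badlyApproximable_goldenRatio : BadlyApproximable φ := by
  refine ⟨1 / 5, by norm_num, fun m hm => ?_⟩
  have hm' : (1 : ℝ) ≤ m := by exact_mod_cast hm
  set p := round (m * φ)
  rw [UnitAddCircle.norm_eq]
  set e := |m * φ - p|
  have hψ : |m * ψ - p| ≤ e + m * √5 := by
    have h : m * ψ - p = (m * φ - p) - m * √5 := by rw [← goldenRatio_sub_goldenConj]; ring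
    rw [h]
    calc |m * φ - p - m * √5| ≤ e + |m * √5| := abs_sub _ _
      _ = e + m * √5 := by rw [abs_of_nonneg (by positivity)]
  have hprod : 1 ≤ e * |m * ψ - p| := by
    have hφ : (m * φ - p) * (m * ψ - p) = ((p ^ 2 - m * p - m ^ 2 : ℤ) : ℝ) := by
      push_cast
      linear_combination (m : ℝ) ^ 2 * goldenRatio_mul_goldenConj -
        m * p * goldenRatio_add_goldenConj
    have hne : (m * φ - p) * (m * ψ - p) ≠ 0 :=
      mul_ne_zero (sub_ne_zero.2 ((goldenRatio_irrational.natCast_mul hm.ne').ne_int p))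
        (sub_ne_zero.2 ((goldenConj_irrational.natCast_mul hm.ne').ne_int p))
    rw [← abs_mul, hφ]
    rw [hφ] at hne
    exact_mod_cast Int.one_le_abs (by exact_mod_cast hne)
  have hsqrt : √5 < 9 / 4 := by
    rw [Real.sqrt_lt' (by norm_num)]; norm_num
  by_contra! h
  have he : e < 1 / 5 := lt_of_le_of_lt (le_mul_of_one_le_left (abs_nonneg _) hm') h
  nlinarith [abs_nonneg (m * ψ - p), abs_nonneg (m * φ - p)]

theorem skewShift_iterate_apply (k : ℕ) (α β : UnitAddCircle) (n : ℕ) (j : Fin k) :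
    (skewShift k α)^[n] (fun i => if (i : ℕ) = 0 then β else 0) j
      = n.choose j • β + n.choose (j + 1) • α := by
  induction n generalizing j with
  | zero => by_cases hj : (j : ℕ) = 0 <;> simp [hj, Nat.choose_eq_zero_of_lt (Nat.pos_of_ne_zero _)]
  | succ n ih =>
    rw [Function.iterate_succ_apply', skewShift]
    split_ifs with hj
    · simp [ih, hj, succ_nsmul, add_assoc]
    · obtain ⟨i, hi⟩ := Nat.exists_eq_succ_of_ne_zero hj
      simp only [ih, hi, Nat.succ_sub_one, Nat.choose_succ_succ', add_nsmul]
      abel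

theorem UnitAddCircle.eq_of_coe_eq_of_abs_sub_le {x y : ℝ} (h : (x : UnitAddCircle) = y)
    (hxy : |x - y| ≤ 1 / 2) : x = y := by
  have := (AddCircle.norm_coe_eq_abs_iff (p := (1 : ℝ)) (x := x - y) one_ne_zero).2
    (by simpa using hxy)
  rw [AddCircle.coe_sub, h, sub_self, norm_zero, eq_comm, abs_eq_zero, sub_eq_zero] at this
  exact this

theorem UnitAddCircle.norm_coe_le_abs (x : ℝ) : ‖(x : UnitAddCircle)‖ ≤ |x| := by
  simpa [UnitAddCircle.norm_eq] using round_le x 0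

theorem UnitAddCircle.coe_eq_coe_iff {x y : ℝ} :
    (x : UnitAddCircle) = y ↔ ∃ m : ℤ, x = y + m := by
  rw [← sub_eq_zero, ← AddCircle.coe_sub, AddCircle.coe_eq_zero_iff]
  simp only [zsmul_eq_mul, mul_one, eq_comm (b := x - y), sub_eq_iff_eq_add']

theorem eq_quadratic_of_abs_le_of_secondDiff_coe_eq {r : ℕ → ℝ} {N : ℕ} {ε : ℝ} {c : UnitAddCircle}
    (hε : 16 * ε ≤ 1) (hr : ∀ n ≤ N, |r n| ≤ ε)
    (hc : ∀ n, n + 2 ≤ N → ((r (n + 2) - 2 * r (n + 1) + r n : ℝ) : UnitAddCircle) = c)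
    {n : ℕ} (hn : n ≤ N) :
    r n = r 0 + n * (r 1 - r 0) + n.choose 2 * (r 2 - 2 * r 1 + r 0) := by
  set s := r 2 - 2 * r 1 + r 0
  have hconst : ∀ n, n + 2 ≤ N → r (n + 2) - 2 * r (n + 1) + r n = s := by
    intro n hn
    refine UnitAddCircle.eq_of_coe_eq_of_abs_sub_le ((hc n hn).trans (hc 0 (by omega)).symm) ?_
    have := abs_le.1 (hr 0 (by omega)); have := abs_le.1 (hr 1 (by omega))
    have := abs_le.1 (hr 2 (by omega)); have := abs_le.1 (hr n (by omega))
    have := abs_le.1 (hr (n + 1) (by omega)); have := abs_le.1 (hr (n + 2) hn)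
    exact abs_le.2 ⟨by linarith, by linarith⟩
  have hdiff : ∀ n, n + 1 ≤ N → r (n + 1) - r n = r 1 - r 0 + n * s := by
    intro n hn
    induction n with
    | zero => simp
    | succ n ih =>
      have := hconst n hn
      have := ih (by omega)
      push_cast
      linarith
  induction n with
  | zero => simp
  | succ n ih =>
    have := hdiff n hn
    have := ih (by omega)
    push_cast [Nat.choose_succ_succ', Nat.choose_one_right]
    linarith

theorem abs_two_mul_sub_le_of_quadratic {r₀ d s ε : ℝ} {q : ℕ} (hq : 0 < q) (h₀ : |r₀| ≤ ε)
    (h₁ : |r₀ + q * d + q.choose 2 * s| ≤ ε)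
    (h₂ : |r₀ + (2 * q : ℕ) * d + (2 * q).choose 2 * s| ≤ ε) :
    q * |2 * d - (q - 1) * s| ≤ 12 * ε := by
  have hq' : (0 : ℝ) < q := by exact_mod_cast hq
  have hq₁ : (1 : ℝ) ≤ q := by exact_mod_cast hq
  set A := r₀ + q * d + q.choose 2 * s
  set B := r₀ + (2 * q : ℕ) * d + (2 * q).choose 2 * s
  have hsecond : |q ^ 2 * s| ≤ 4 * ε := by
    have : (q : ℝ) ^ 2 * s = B - 2 * A + r₀ := by
      simp only [A, B, Nat.cast_choose_two]; push_cast; ring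
    rw [this]
    have := abs_le.1 h₀; have := abs_le.1 h₁; have := abs_le.1 h₂
    exact abs_le.2 ⟨by linarith, by linarith⟩
  have hw : |((q : ℝ) - 1) / q| ≤ 1 := by
    rw [abs_le]; constructor
    · rw [le_div_iff₀ hq']; linarith
    · rw [div_le_iff₀ hq']; linarith
  calc q * |2 * d - (q - 1) * s| = |2 * (A - r₀) - 2 * ((q - 1) / q * (q ^ 2 * s))| := by
        rw [← abs_of_pos hq', ← abs_mul, abs_of_pos hq']
        congr 1
        simp only [A, Nat.cast_choose_two]
        field_simp
        ring
    _ ≤ 2 * (|A| + |r₀|) + 2 * (1 * (4 * ε)) := by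
        refine (abs_sub _ _).trans (add_le_add ?_ ?_) <;> rw [abs_mul, abs_two]
        · gcongr; exact abs_sub _ _
        · rw [abs_mul]; gcongr
    _ ≤ 12 * ε := by linarith

theorem mul_norm_two_mul_le_of_secondDiff_coe_eq {r : ℕ → ℝ} {q : ℕ} {ε a β : ℝ}
    (hq : 0 < q) (hε : 16 * ε ≤ 1) (hr : ∀ n ≤ 2 * q, |r n| ≤ ε)
    (hsec : ∀ n, ((r (n + 2) - 2 * r (n + 1) + r n : ℝ) : UnitAddCircle) = (q * a : ℝ))
    (hfirst : ((r 1 - r 0 : ℝ) : UnitAddCircle) = (q * β + q.choose 2 * a : ℝ)) :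
    q * ‖((2 * q * β : ℝ) : UnitAddCircle)‖ ≤ 12 * ε := by
  have hquad : ∀ n ≤ 2 * q, r n = r 0 + n * (r 1 - r 0) + n.choose 2 * (r 2 - 2 * r 1 + r 0) :=
    fun n hn => eq_quadratic_of_abs_le_of_secondDiff_coe_eq hε hr (fun n _ => hsec n) hn
  have hbound := abs_two_mul_sub_le_of_quadratic hq (hr 0 (by omega))
    (by rw [← hquad q (by omega)]; exact hr q (by omega))
    (by rw [← hquad (2 * q) le_rfl]; exact hr (2 * q) le_rfl)
  obtain ⟨m₁, h₁⟩ := UnitAddCircle.coe_eq_coe_iff.1 hfirst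
  obtain ⟨m₂, h₂⟩ := UnitAddCircle.coe_eq_coe_iff.1 (hsec 0)
  have hcoe : ((2 * q * β : ℝ) : UnitAddCircle)
      = ((2 * (r 1 - r 0) - (q - 1) * (r 2 - 2 * r 1 + r 0) : ℝ) : UnitAddCircle) := by
    refine UnitAddCircle.coe_eq_coe_iff.2 ⟨(q - 1) * m₂ - 2 * m₁, ?_⟩
    rw [Nat.cast_choose_two] at h₁
    push_cast
    linear_combination -2 * h₁ + (q - 1) * h₂
  rw [hcoe]
  exact (mul_le_mul_of_nonneg_left (UnitAddCircle.norm_coe_le_abs _) q.cast_nonneg).trans hbound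

theorem not_orbitRP_skewShift_of_badlyApproximable {k : ℕ} (hk : 3 ≤ k) (α : UnitAddCircle)
    {β : ℝ} (hβ : BadlyApproximable β) :
    ¬ OrbitRP k (skewShift k α) (fun j => if (j : ℕ) = 0 then (β : UnitAddCircle) else 0) := by
  obtain ⟨a, rfl⟩ := QuotientAddGroup.mk_surjective α
  obtain ⟨c, hc, hcβ⟩ := hβ
  set ε := min (c / 100) (1 / 16)
  intro hRP
  obtain ⟨q, hq, hsmall⟩ := hRP ε (by positivity) 2 two_pos
  set X : ℕ → ℝ := fun n => n.choose 2 * β + n.choose 3 * a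
  have horbit : ∀ n, (skewShift k a)^[n] (fun j => if (j : ℕ) = 0 then (β : UnitAddCircle) else 0)
      ⟨2, hk⟩ = X n := by
    intro n
    rw [skewShift_iterate_apply]
    simp only [X, AddCircle.coe_add, ← nsmul_eq_mul, AddCircle.coe_nsmul]
  have hX₁ : ∀ n, X (n + 1) - X n = n * β + n.choose 2 * a := by
    intro n
    simp only [X]
    push_cast [Nat.choose_succ_succ', Nat.choose_one_right]
    ring
  have hX₂ : ∀ n, X (n + 2) - 2 * X (n + 1) + X n = β + n * a := by
    intro n
    have := hX₁ (n + 1)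
    have := hX₁ n
    push_cast [Nat.choose_succ_succ', Nat.choose_one_right] at *
    linarith
  -- `r n` is the lift to `[-1/2, 1/2]` of the displacement of the third coordinate after `q` steps
  set v : ℕ → ℝ := fun n => X (q + n) - X n
  set r : ℕ → ℝ := fun n => v n - round (v n)
  have hr : ∀ n ≤ 2 * q, |r n| ≤ ε := by
    intro n hn
    rw [← UnitAddCircle.norm_eq, AddCircle.coe_sub, ← horbit, ← horbit, ← dist_eq_norm,
      dist_comm, add_comm]
    exact (Finset.single_le_sum (fun j _ => dist_nonneg) (Finset.mem_univ _)).trans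
      (hsmall n hn).le
  have hsec : ∀ n, ((r (n + 2) - 2 * r (n + 1) + r n : ℝ) : UnitAddCircle) = (q * a : ℝ) := by
    intro n
    refine UnitAddCircle.coe_eq_coe_iff.2
      ⟨2 * round (v (n + 1)) - round (v (n + 2)) - round (v n), ?_⟩
    have h₁ := hX₂ (q + n)
    have h₂ := hX₂ n
    simp only [r, v, ← add_assoc]
    push_cast at h₁ ⊢
    linarith
  have hfirst : ((r 1 - r 0 : ℝ) : UnitAddCircle) = (q * β + q.choose 2 * a : ℝ) := by
    refine UnitAddCircle.coe_eq_coe_iff.2 ⟨round (v 0) - round (v 1), ?_⟩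
    have h₁ := hX₁ q
    have h₂ := hX₁ 0
    norm_num at h₂
    simp only [r, v, add_zero]
    push_cast
    linarith
  have hbound := mul_norm_two_mul_le_of_secondDiff_coe_eq hq
    (by linarith [min_le_right (c / 100) (1 / 16)]) hr hsec hfirst
  have hc2q := hcβ (2 * q) (by omega)
  push_cast at hc2q
  linarith [min_le_left (c / 100) (1 / 16)]

theorem stmt18_general (k : ℕ) (hk : 3 ≤ k) (α : ℝ) :
    ∃ ω : Fin k → UnitAddCircle, ¬ OrbitRP k (skewShift k (α : UnitAddCircle)) ω :=
  ⟨_, not_orbitRP_skewShift_of_badlyApproximable hk α Real.badlyApproximable_goldenRatio⟩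

theorem stmt18 (k : ℕ) (hk : 3 ≤ k) (α : ℝ) (hα : Irrational α) :
    ∃ ω : Fin k → UnitAddCircle, ¬ OrbitRP k (skewShift k (α : UnitAddCircle)) ω :=
  stmt18_general k hk α
end

section
/- Let T : 𝕋^k → 𝕋^k with k ≥ 4 be the skew-shift T(ω_1,...,ω_k) = (ω_1 + α, ω_2 + ω_1, ..., ω_k + ω_{k−1}) with α irrational. Then the set PRP(T) of points whose orbit has the repetition property has Lebesgue measure zero; in particular T does not have the metric repetition property relative to Lebesgue measure. -/
open Filter MeasureTheory

/-!
The fourth coordinate of `T^[n] ω` is `p n mod 1` for a real quartic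
`p n = a n⁴ + b n³ + c n² + d n + e` with `12 b = 2 ω₀ - 3 α` (for real lifts of `ω₀`, `α`).
The repetition property gives, for every `ε`, a `q` such that `D n = p (n + q) - p n` is within `ε`
of an integer for `n ≤ 6 q`. With step `m ≤ 2 q`, the third difference of `D` is `m³ · 24 a q` and
the second one is `m³ · 24 a q + m² · (12 a q² + 6 b q)`; since both stay small for all such `m`,
a doubling argument bounds `‖24 a q‖` by `O(ε / q³)` and `‖12 a q² + 6 b q‖` by `O(ε / q²)`.
Hence `q² ‖12 b q‖ = O(ε)`: `y = 2 ω₀ - 3 α` satisfies `liminf q² ‖q y‖ = 0`, and such `y` form a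
null set because `∑ 1 / q²` converges.
-/

open Finset

theorem norm_sub_three_nsmul_add_three_nsmul_sub_le {E : Type*} [SeminormedAddCommGroup E]
    (x y z w : E) : ‖x - 3 • y + 3 • z - w‖ ≤ ‖x‖ + 3 * ‖y‖ + 3 * ‖z‖ + ‖w‖ := by
  have h₁ := norm_sub_le (x - 3 • y + 3 • z) w
  have h₂ := norm_add_le (x - 3 • y) (3 • z)
  have h₃ := norm_sub_le x (3 • y)
  have h₄ := norm_nsmul_le (n := 3) (a := y)
  have h₅ := norm_nsmul_le (n := 3) (a := z)
  push_cast at h₄ h₅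
  linarith

theorem norm_sub_two_nsmul_add_sub_le {E : Type*} [SeminormedAddCommGroup E]
    (x y z w : E) : ‖x - 2 • y + z - w‖ ≤ ‖x‖ + 2 * ‖y‖ + ‖z‖ + ‖w‖ := by
  have h₁ := norm_sub_le (x - 2 • y + z) w
  have h₂ := norm_add_le (x - 2 • y) z
  have h₃ := norm_sub_le x (2 • y)
  have h₄ := norm_nsmul_le (n := 2) (a := y)
  push_cast at h₄
  linarith

namespace UnitAddCircle

theorem norm_nsmul_eq_mul_norm {x : UnitAddCircle} {n : ℕ} (h : n * ‖x‖ ≤ 1 / 2) :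
    ‖n • x‖ = n * ‖x‖ := by
  obtain ⟨r, rfl⟩ := QuotientAddGroup.mk_surjective x
  set s := r - round r
  have hs : ((s : ℝ) : UnitAddCircle) = r := by simp [s]
  have hs_norm : ‖(s : UnitAddCircle)‖ = |s| :=
    (AddCircle.norm_coe_eq_abs_iff 1 one_ne_zero).2 (by simpa using abs_sub_round r)
  rw [← hs, hs_norm] at h ⊢
  rw [← AddCircle.coe_nsmul, nsmul_eq_mul, (AddCircle.norm_coe_eq_abs_iff 1 one_ne_zero).2,
    abs_mul, Nat.abs_cast]
  simpa [abs_mul] using h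

theorem pow_mul_norm_le_of_forall_norm_pow_nsmul_le {x : UnitAddCircle} {e M : ℕ} {θ : ℝ}
    (hM : 0 < M) (hθ : 2 ^ e * θ ≤ 1 / 2) (h : ∀ m, 0 < m → m ≤ M → ‖m ^ e • x‖ ≤ θ) :
    (M : ℝ) ^ e * ‖x‖ ≤ θ := by
  induction M, hM using Nat.le_induction with
  | base => simpa using h 1 one_pos le_rfl
  | succ m hm ih =>
    have hm' : (m : ℝ) ^ e * ‖x‖ ≤ θ := ih fun j hj hjm => h j hj (by omega)
    have hdouble : ((m + 1 : ℕ) : ℝ) ^ e ≤ 2 ^ e * (m : ℝ) ^ e := by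
      rw [← mul_pow]
      gcongr
      push_cast
      linarith [(Nat.one_le_cast (α := ℝ)).2 hm]
    have hsmall : ((m + 1) ^ e : ℕ) * ‖x‖ ≤ 1 / 2 := by
      push_cast at hdouble ⊢
      calc ((m : ℝ) + 1) ^ e * ‖x‖ ≤ 2 ^ e * (m : ℝ) ^ e * ‖x‖ := by gcongr
        _ ≤ 2 ^ e * θ := by rw [mul_assoc]; gcongr
        _ ≤ 1 / 2 := hθ
    have := h (m + 1) m.succ_pos le_rfl
    rw [norm_nsmul_eq_mul_norm hsmall] at this
    exact_mod_cast this

-- `ε ≤ 1 / 128` gives `2 ^ 3 * (8 * ε) ≤ 1 / 2`, as the doubling lemma needs below.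
theorem sq_mul_norm_nsmul_le_of_forall_dist_lt {p : ℕ → ℝ} {a b c d e : ℝ}
    (hp : ∀ n : ℕ, p n = a * n ^ 4 + b * n ^ 3 + c * n ^ 2 + d * n + e)
    {q : ℕ} (hq : 0 < q) {ε : ℝ} (hε : ε ≤ 1 / 128)
    (h : ∀ n ≤ 6 * q, dist (p n : UnitAddCircle) (p (n + q)) < ε) :
    (q : ℝ) ^ 2 * ‖q • ((12 * b : ℝ) : UnitAddCircle)‖ ≤ 7 * ε := by
  set D : ℕ → UnitAddCircle := fun n => (p (n + q) : UnitAddCircle) - p n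
  set s : UnitAddCircle := ((24 * a * q : ℝ) : UnitAddCircle)
  set t : UnitAddCircle := ((12 * a * q ^ 2 + 6 * b * q : ℝ) : UnitAddCircle)
  have third_diff (m : ℕ) : D (3 * m) - 3 • D (2 * m) + 3 • D m - D 0 = m ^ 3 • s := by
    simp only [D, s, ← AddCircle.coe_nsmul, ← AddCircle.coe_sub, ← AddCircle.coe_add,
      nsmul_eq_mul, hp]
    congr 1; push_cast; ring
  have second_diff (m : ℕ) : D (2 * m) - 2 • D m + D 0 - m ^ 3 • s = m ^ 2 • t := by
    simp only [D, s, t, ← AddCircle.coe_nsmul, ← AddCircle.coe_sub, ← AddCircle.coe_add,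
      nsmul_eq_mul, hp]
    congr 1; push_cast; ring
  have coeff : q • ((12 * b : ℝ) : UnitAddCircle) = 2 • t - q • s := by
    simp only [s, t, ← AddCircle.coe_nsmul, ← AddCircle.coe_sub, nsmul_eq_mul]
    congr 1; push_cast; ring
  have hD (n : ℕ) (hn : n ≤ 6 * q) : ‖D n‖ ≤ ε := by
    have := h n hn
    rw [dist_comm, dist_eq_norm] at this
    exact this.le
  have hs : ((2 * q : ℕ) : ℝ) ^ 3 * ‖s‖ ≤ 8 * ε :=
    pow_mul_norm_le_of_forall_norm_pow_nsmul_le (by omega) (by linarith) fun m _ hm => by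
      rw [← third_diff]
      linarith [norm_sub_three_nsmul_add_three_nsmul_sub_le (D (3 * m)) (D (2 * m)) (D m) (D 0),
        hD (3 * m) (by omega), hD (2 * m) (by omega), hD m (by omega), hD 0 (by omega)]
  have ht : ((2 * q : ℕ) : ℝ) ^ 2 * ‖t‖ ≤ 12 * ε :=
    pow_mul_norm_le_of_forall_norm_pow_nsmul_le (by omega) (by linarith) fun m _ hm => by
      have hms : ‖m ^ 3 • s‖ ≤ 8 * ε := by
        refine norm_nsmul_le.trans (le_trans ?_ hs)
        push_cast
        gcongr
        exact_mod_cast hm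
      rw [← second_diff]
      linarith [norm_sub_two_nsmul_add_sub_le (D (2 * m)) (D m) (D 0) (m ^ 3 • s),
        hD (2 * m) (by omega), hD m (by omega), hD 0 (by omega)]
  have hcoeff : ‖q • ((12 * b : ℝ) : UnitAddCircle)‖ ≤ 2 * ‖t‖ + q * ‖s‖ := by
    rw [coeff]
    refine (norm_sub_le _ _).trans ?_
    gcongr <;> exact norm_nsmul_le
  push_cast at hs ht
  calc (q : ℝ) ^ 2 * ‖q • ((12 * b : ℝ) : UnitAddCircle)‖
      ≤ (q : ℝ) ^ 2 * (2 * ‖t‖ + q * ‖s‖) := by gcongr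
    _ = ((2 * q) ^ 2 * ‖t‖) / 2 + ((2 * q) ^ 3 * ‖s‖) / 8 := by ring
    _ ≤ 7 * ε := by linarith

def sqApproximable : Set UnitAddCircle :=
  {y | ∀ δ > 0, ∃ q : ℕ, 0 < q ∧ (q : ℝ) ^ 2 * ‖q • y‖ ≤ δ}

theorem coe_twelve_mul_mem_sqApproximable {p : ℕ → ℝ} {a b c d e : ℝ}
    (hp : ∀ n : ℕ, p n = a * n ^ 4 + b * n ^ 3 + c * n ^ 2 + d * n + e)
    (h : HasRP fun n => (p n : UnitAddCircle)) :
    ((12 * b : ℝ) : UnitAddCircle) ∈ sqApproximable := by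
  intro δ hδ
  set ε := min (δ / 7) (1 / 128)
  obtain ⟨q, hq, hrep⟩ := h ε (by positivity) 6 (by norm_num)
  refine ⟨q, hq, (sq_mul_norm_nsmul_le_of_forall_dist_lt hp hq (min_le_right _ _) hrep).trans ?_⟩
  linarith [min_le_left (δ / 7) (1 / 128)]

theorem volume_setOf_norm_nsmul_le {q : ℕ} (hq : q ≠ 0) (r : ℝ) :
    volume {y : UnitAddCircle | ‖q • y‖ ≤ r} ≤ ENNReal.ofReal (2 * r) := by
  have hpre : {y : UnitAddCircle | ‖q • y‖ ≤ r} =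
      (fun y : UnitAddCircle => (q : ℤ) • y) ⁻¹' Metric.closedBall 0 r := by
    ext y; simp
  rw [hpre, (Measure.measurePreserving_zsmul volume (by exact_mod_cast hq)).measure_preimage
    measurableSet_closedBall.nullMeasurableSet, AddCircle.volume_closedBall]
  exact ENNReal.ofReal_le_ofReal (min_le_right _ _)

theorem volume_sqApproximable : volume sqApproximable = 0 := by
  have hsum : Summable fun q : ℕ => 1 / ((q : ℝ) + 1) ^ 2 := by
    simpa using (summable_nat_add_iff 1).2 (Real.summable_one_div_nat_pow.2 one_lt_two)
  set S := ∑' q : ℕ, 1 / ((q : ℝ) + 1) ^ 2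
  have hbound (δ : ℝ) (hδ : 0 < δ) : volume sqApproximable ≤ ENNReal.ofReal (2 * δ * S) := by
    have hcover : sqApproximable ⊆
        ⋃ q : ℕ, {y : UnitAddCircle | ‖(q + 1) • y‖ ≤ δ / ((q : ℝ) + 1) ^ 2} := by
      intro y hy
      obtain ⟨q, hq, hqy⟩ := hy δ hδ
      obtain ⟨q, rfl⟩ := Nat.exists_eq_add_one_of_ne_zero hq.ne'
      refine Set.mem_iUnion.2 ⟨q, ?_⟩
      rw [Set.mem_ofPred_eq, le_div_iff₀ (by positivity)]
      push_cast at hqy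
      linarith
    calc volume sqApproximable
        ≤ ∑' q : ℕ, volume {y : UnitAddCircle | ‖(q + 1) • y‖ ≤ δ / ((q : ℝ) + 1) ^ 2} :=
          (measure_mono hcover).trans (measure_iUnion_le _)
      _ ≤ ∑' q : ℕ, ENNReal.ofReal (2 * δ * (1 / ((q : ℝ) + 1) ^ 2)) := by
          refine ENNReal.tsum_le_tsum fun q => ?_
          convert volume_setOf_norm_nsmul_le q.succ_ne_zero _ using 2
          ring
      _ = ENNReal.ofReal (2 * δ * S) := by
          rw [← ENNReal.ofReal_tsum_of_nonneg (fun q => by positivity) (hsum.mul_left _),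
            tsum_mul_left]
  refine le_antisymm (ENNReal.le_of_forall_pos_le_add fun ε hε _ => ?_) zero_le
  have hS : 0 ≤ S := tsum_nonneg fun q => by positivity
  refine (hbound (ε / (2 * S + 1)) (by positivity)).trans ?_
  rw [zero_add, ← ENNReal.ofReal_coe_nnreal]
  refine ENNReal.ofReal_le_ofReal ?_
  calc 2 * (ε / (2 * S + 1)) * S = ε * (2 * S / (2 * S + 1)) := by ring
    _ ≤ ε := mul_le_of_le_one_right ε.coe_nonneg ((div_le_one (by positivity)).2 (by linarith))

end UnitAddCircle

theorem Finset.Nat.sum_antidiagonal_choose_succ_nsmul {M : Type*} [AddCommMonoid M]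
    (v : ℕ → M) (n i : ℕ) :
    ∑ p ∈ antidiagonal (i + 1), (n + 1).choose p.1 • v p.2 =
      ∑ p ∈ antidiagonal (i + 1), n.choose p.1 • v p.2 +
        ∑ p ∈ antidiagonal i, n.choose p.1 • v p.2 := by
  simp only [Nat.sum_antidiagonal_succ, Nat.choose_succ_succ', add_nsmul, sum_add_distrib,
    Nat.choose_zero_right]
  abel

namespace skewShift

variable {k : ℕ} (α : UnitAddCircle)

def augment (ω : Fin k → UnitAddCircle) : ℕ → UnitAddCircle
  | 0 => α
  | i + 1 => if h : i < k then ω ⟨i, h⟩ else 0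

theorem apply_mk (ω : Fin k → UnitAddCircle) {i : ℕ} (hi : i < k) :
    skewShift k α ω ⟨i, hi⟩ = ω ⟨i, hi⟩ + augment α ω i := by
  cases i with
  | zero => simp [skewShift, augment]
  | succ i => simp [skewShift, augment, show i < k by omega]

theorem augment_apply_succ (ω : Fin k → UnitAddCircle) {i : ℕ} (hi : i < k) :
    augment α (skewShift k α ω) (i + 1) = augment α ω (i + 1) + augment α ω i := by
  simp [augment, hi, apply_mk]

theorem augment_iterate (ω : Fin k → UnitAddCircle) (n : ℕ) {i : ℕ} (hi : i ≤ k) :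
    augment α ((skewShift k α)^[n] ω) i =
      ∑ p ∈ antidiagonal i, n.choose p.1 • augment α ω p.2 := by
  induction n generalizing i with
  | zero => cases i <;> simp [Finset.Nat.sum_antidiagonal_succ]
  | succ n ih =>
    rw [Function.iterate_succ_apply']
    cases i with
    | zero => simp [augment]
    | succ i =>
      rw [augment_apply_succ _ _ (by omega), ih hi, ih (by omega),
        Finset.Nat.sum_antidiagonal_choose_succ_nsmul]

theorem iterate_apply_mk (ω : Fin k → UnitAddCircle) (n : ℕ) {i : ℕ} (hi : i < k) :
    (skewShift k α)^[n] ω ⟨i, hi⟩ =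
      ∑ p ∈ antidiagonal (i + 1), n.choose p.1 • augment α ω p.2 := by
  rw [← augment_iterate α ω n hi]
  simp [augment, hi]

end skewShift

theorem OrbitRP.hasRP_apply {k : ℕ} {T : (Fin k → UnitAddCircle) → Fin k → UnitAddCircle}
    {ω : Fin k → UnitAddCircle} (h : OrbitRP k T ω) (j : Fin k) :
    HasRP fun n => T^[n] ω j := by
  intro ε hε r hr
  obtain ⟨q, hq, hrep⟩ := h ε hε r hr
  exact ⟨q, hq, fun n hn =>
    (single_le_sum (fun j _ => dist_nonneg) (mem_univ j)).trans_lt (hrep n hn)⟩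

theorem OrbitRP.two_zsmul_sub_mem_sqApproximable {k : ℕ} (hk : 4 ≤ k) {α : ℝ}
    {ω : Fin k → UnitAddCircle} (h : OrbitRP k (skewShift k α) ω) :
    (2 : ℤ) • ω ⟨0, by omega⟩ - ((3 * α : ℝ) : UnitAddCircle) ∈ UnitAddCircle.sqApproximable := by
  obtain ⟨w₀, hw₀⟩ := QuotientAddGroup.mk_surjective (ω ⟨0, by omega⟩)
  obtain ⟨w₁, hw₁⟩ := QuotientAddGroup.mk_surjective (ω ⟨1, by omega⟩)
  obtain ⟨w₂, hw₂⟩ := QuotientAddGroup.mk_surjective (ω ⟨2, by omega⟩)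
  obtain ⟨w₃, hw₃⟩ := QuotientAddGroup.mk_surjective (ω ⟨3, by omega⟩)
  set p : ℕ → ℝ := fun n =>
    w₃ + n * w₂ + n.choose 2 * w₁ + n.choose 3 * w₀ + n.choose 4 * α
  have horbit :
      (fun n => (skewShift k α)^[n] ω ⟨3, by omega⟩) = fun n => (p n : UnitAddCircle) := by
    funext n
    rw [skewShift.iterate_apply_mk]
    simp [Nat.sum_antidiagonal_succ, skewShift.augment, show 0 < k by omega, show 1 < k by omega,
      show 2 < k by omega, show 3 < k by omega, p, ← hw₀, ← hw₁, ← hw₂, ← hw₃]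
    abel
  have hp (n : ℕ) : p n = α / 24 * n ^ 4 + (w₀ / 6 - α / 4) * n ^ 3
      + (11 * α / 24 - w₀ / 2 + w₁ / 2) * n ^ 2 + (w₀ / 3 - α / 4 - w₁ / 2 + w₂) * n + w₃ := by
    simp [p, Nat.cast_choose_eq_descPochhammer_div, descPochhammer_succ_right, Nat.factorial]
    ring
  have hRP : HasRP fun n => (p n : UnitAddCircle) := horbit ▸ h.hasRP_apply _
  convert UnitAddCircle.coe_twelve_mul_mem_sqApproximable hp hRP using 1
  rw [← hw₀, ← AddCircle.coe_zsmul, ← AddCircle.coe_sub]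
  congr 1
  ring

theorem stmt19_general (k : ℕ) (hk : 4 ≤ k) (α : ℝ) :
    volume { ω : Fin k → UnitAddCircle | OrbitRP k (skewShift k (α : UnitAddCircle)) ω } = 0 := by
  set g : UnitAddCircle → UnitAddCircle := fun x => (2 : ℤ) • x - ((3 * α : ℝ) : UnitAddCircle)
  have hg : MeasurePreserving g :=
    (measurePreserving_sub_right _ _).comp (Measure.measurePreserving_zsmul _ two_ne_zero)
  have hsub : { ω | OrbitRP k (skewShift k (α : UnitAddCircle)) ω } ⊆
      Function.eval ⟨0, by omega⟩ ⁻¹' (g ⁻¹' UnitAddCircle.sqApproximable) :=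
    fun ω h => h.two_zsmul_sub_mem_sqApproximable hk
  refine measure_mono_null hsub ?_
  rw [volume_pi]
  exact Measure.pi_eval_preimage_null _
    (hg.quasiMeasurePreserving.preimage_null UnitAddCircle.volume_sqApproximable)

theorem stmt19 (k : ℕ) (hk : 4 ≤ k) (α : ℝ) (hα : Irrational α) :
    volume { ω : Fin k → UnitAddCircle | OrbitRP k (skewShift k (α : UnitAddCircle)) ω } = 0 :=
  stmt19_general k hk α
end
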